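/- arXiv:2012.13610 — 5 statements merged into one kernel-verified Lean document; each statement's English description precedes it below -/
import Mathlib

section
/- Let Π_S u = Q (Q^T A_ΓΓ Q)^{-1} Q^T A_ΓΓ u be the A_ΓΓ-orthogonal projection onto span(Q), where Q consists of generalized eigenvectors of S ξ = λ A_ΓΓ ξ with eigenvalues λ_1,…,λ_k and D = diag(1-λ_j). Then for all u, v: v^T (A_ΓΓ - A_ΓΓ Q D (Q^T A_ΓΓ Q)^{-1} Q^T A_ΓΓ) u = (Π_S v)^T S (Π_S u) + (v - Π_S v)^T A_ΓΓ (u - Π_S u). -/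
open Matrix

private lemma dot_helper {p : Type*} [Fintype p] (B : Matrix p p ℝ) (x y : p → ℝ) :
    (B *ᵥ x) ⬝ᵥ y = x ⬝ᵥ (Bᵀ *ᵥ y) := by
  rw [Matrix.dotProduct_mulVec, Matrix.vecMul_transpose, dotProduct_comm]

/-- Theorem 3.5 of the paper: the coarse bilinear form equals the
Schur energy of the `A_ΓΓ`-orthogonal projection onto the eigenvector space
plus the `A_ΓΓ`-energy of the complement. -/
theorem coarse_bilinear_form_decomposition
    {p k : Type*} [Fintype p] [Fintype k] [DecidableEq p] [DecidableEq k]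
    (AΓΓ : Matrix p p ℝ) (S : Matrix p p ℝ)
    (hAΓΓ : AΓΓ.PosDef) (hS : S.PosSemidef)
    (Q : Matrix p k ℝ) (l : k → ℝ)
    (heig : S * Q = AΓΓ * Q * Matrix.diagonal l)
    (hQrank : LinearIndependent ℝ (fun j => (Qᵀ j : p → ℝ)))
    (hQinv : IsUnit (Qᵀ * AΓΓ * Q).det)
    (u v : p → ℝ) :
    v ⬝ᵥ ((AΓΓ - AΓΓ * Q * Matrix.diagonal (fun j => 1 - l j) * (Qᵀ * AΓΓ * Q)⁻¹ * Qᵀ * AΓΓ) *ᵥ u) =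
      (Q *ᵥ ((Qᵀ * AΓΓ * Q)⁻¹ *ᵥ (Qᵀ *ᵥ (AΓΓ *ᵥ v)))) ⬝ᵥ
          (S *ᵥ (Q *ᵥ ((Qᵀ * AΓΓ * Q)⁻¹ *ᵥ (Qᵀ *ᵥ (AΓΓ *ᵥ u))))) +
        (v - Q *ᵥ ((Qᵀ * AΓΓ * Q)⁻¹ *ᵥ (Qᵀ *ᵥ (AΓΓ *ᵥ v)))) ⬝ᵥ
          (AΓΓ *ᵥ (u - Q *ᵥ ((Qᵀ * AΓΓ * Q)⁻¹ *ᵥ (Qᵀ *ᵥ (AΓΓ *ᵥ u))))) := by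
  set A := AΓΓ with hAdef
  set M := (Qᵀ * A * Q)⁻¹ with hMdef
  set L := Matrix.diagonal l with hLdef
  set D := Matrix.diagonal (fun j => 1 - l j) with hDdef
  have hA : Aᵀ = A := by
    have := hAΓΓ.1
    rwa [Matrix.IsHermitian, Matrix.conjTranspose_eq_transpose_of_trivial] at this
  have hM1 : M * (Qᵀ * A * Q) = 1 := Matrix.nonsing_inv_mul _ hQinv
  have hMT : Mᵀ = M := by
    rw [hMdef, Matrix.transpose_nonsing_inv]
    congr 1
    rw [Matrix.transpose_mul, Matrix.transpose_mul, Matrix.transpose_transpose, hA,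
      Matrix.mul_assoc]
  set E := Q * (M * Qᵀ) with hEdef
  set F := Q * (L * (M * Qᵀ)) with hFdef
  have hM1x : ∀ (X : Matrix k p ℝ), M * (Qᵀ * (A * (Q * X))) = X := by
    intro X
    have h := congrArg (fun Y => Y * X) hM1
    simpa [Matrix.mul_assoc] using h
  have hSQx : ∀ (X : Matrix k p ℝ), S * (Q * X) = A * (Q * (L * X)) := by
    intro X
    rw [← Matrix.mul_assoc, heig]
    simp [Matrix.mul_assoc]
  have hET : Eᵀ = E := by
    rw [hEdef]
    simp [Matrix.transpose_mul, Matrix.transpose_transpose, hMT, Matrix.mul_assoc]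
  have hE : E * A * E = E := by
    calc E * A * E = Q * (M * (Qᵀ * (A * (Q * (M * Qᵀ))))) := by
          rw [hEdef]; simp [Matrix.mul_assoc]
      _ = E := by rw [hM1x (M * Qᵀ)]
  have hF : E * S * E = F := by
    calc E * S * E = Q * (M * (Qᵀ * (S * (Q * (M * Qᵀ))))) := by
          rw [hEdef]; simp [Matrix.mul_assoc]
      _ = Q * (M * (Qᵀ * (A * (Q * (L * (M * Qᵀ)))))) := by rw [hSQx (M * Qᵀ)]
      _ = F := by rw [hM1x (L * (M * Qᵀ)), hFdef]
  have hEF : Q * (D * (M * Qᵀ)) = E - F := by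
    have hD1 : D = 1 - L := by
      rw [hDdef, hLdef, ← Matrix.diagonal_one, Matrix.diagonal_sub]
    rw [hD1, Matrix.sub_mul, Matrix.one_mul, Matrix.mul_sub, hEdef, hFdef]
  -- key matrix identity
  have key : A - A * Q * D * M * Qᵀ * A
      = (E * A)ᵀ * (S * (E * A)) + (1 - E * A)ᵀ * (A * (1 - E * A)) := by
    have ht1 : (E * A)ᵀ = A * E := by rw [Matrix.transpose_mul, hA, hET]
    have ht2 : (1 - E * A)ᵀ = 1 - A * E := by
      rw [Matrix.transpose_sub, Matrix.transpose_one, ht1]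
    have hL : A * Q * D * M * Qᵀ * A = A * (E - F) * A := by
      rw [← hEF]; simp [Matrix.mul_assoc]
    rw [ht1, ht2, hL]
    have e1 : (A * E) * (S * (E * A)) = A * (E * S * E) * A := by noncomm_ring
    have e2 : (1 - A * E) * (A * (1 - E * A))
        = A - A * (E * A) - A * E * A + A * (E * A * E) * A := by noncomm_ring
    rw [e1, e2, hE, hF]
    noncomm_ring
  -- reduce the vector statement to the matrix identity
  have hP : Q * M * Qᵀ * A = E * A := by rw [hEdef]; simp [Matrix.mul_assoc]
  have hSP : S * Q * M * Qᵀ * A = S * (E * A) := by rw [hEdef]; simp [Matrix.mul_assoc]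
  simp only [Matrix.mulVec_mulVec, ← Matrix.mul_assoc]
  rw [hP, hSP]
  have hv : v - (E * A) *ᵥ v = (1 - E * A) *ᵥ v := by
    rw [Matrix.sub_mulVec, Matrix.one_mulVec]
  have hu : u - (E * A) *ᵥ u = (1 - E * A) *ᵥ u := by
    rw [Matrix.sub_mulVec, Matrix.one_mulVec]
  rw [hv, hu, show A *ᵥ ((1 - E * A) *ᵥ u) = (A * (1 - E * A)) *ᵥ u from
      Matrix.mulVec_mulVec _ _ _,
    dot_helper (E * A) v, dot_helper (1 - E * A) v,
    Matrix.mulVec_mulVec, Matrix.mulVec_mulVec, ← dotProduct_add,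
    ← Matrix.add_mulVec, key]
end

section
/- Under the assumptions of the previous decomposition, if every generalized eigenvalue of S ξ = λ A_ΓΓ ξ in the orthogonal complement of span(Q) is at least η with 0 < η ≤ 1 (i.e., v^T S v ≥ η v^T A_ΓΓ v for all v with Q^T A_ΓΓ v = 0), and v^T S v < η v^T A_ΓΓ v on span(Q), then the coarse bilinear form a_0(u,u) = u^T (A_ΓΓ - A_ΓΓ Q D (Q^T A_ΓΓ Q)^{-1} Q^T A_ΓΓ) u satisfies a_0(u,u) ≤ (1/η) u^T S u for all u. -/
/-!
Split `u = v + w` with `v = Π_S u` the `A_ΓΓ`-orthogonal projection onto the span of `Q`. Because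
`S Q = A_ΓΓ Q Λ`, the vector `w` is `S`-orthogonal to that span as well, so
`uᵀ S u = vᵀ S v + wᵀ S w`; and because `A_ΓΓ Q D = (A_ΓΓ - S) Q`, the coarse form collapses to
`a₀(u, u) = wᵀ A_ΓΓ w + vᵀ S v`. The gap condition gives `wᵀ A_ΓΓ w ≤ wᵀ S w / η`, and
`vᵀ S v ≤ vᵀ S v / η` since `S` is positive semidefinite and `η ≤ 1`.
-/

open Matrix

namespace Matrix

variable {R p k : Type*} [CommRing R] [Fintype p] [Fintype k]

theorem IsSymm.dotProduct_mulVec_comm {B : Matrix p p R} (hB : B.IsSymm) (v w : p → R) :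
    v ⬝ᵥ (B *ᵥ w) = w ⬝ᵥ (B *ᵥ v) := by
  rw [← hB.eq, dotProduct_transpose_mulVec, hB.eq]

theorem dotProduct_mulVec_add_add {B : Matrix p p R} (hB : B.IsSymm) {v w : p → R}
    (h : v ⬝ᵥ (B *ᵥ w) = 0) :
    (v + w) ⬝ᵥ (B *ᵥ (v + w)) = v ⬝ᵥ (B *ᵥ v) + w ⬝ᵥ (B *ᵥ w) := by
  rw [mulVec_add, dotProduct_add, add_dotProduct, add_dotProduct, h, hB.dotProduct_mulVec_comm w v,
    h, add_zero, zero_add]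

theorem dotProduct_mulVec_sub_sub_mulVec {A S : Matrix p p R} (hA : A.IsSymm) (hS : S.IsSymm)
    {v w : p → R} (hA0 : v ⬝ᵥ (A *ᵥ w) = 0) (hS0 : v ⬝ᵥ (S *ᵥ w) = 0) :
    (v + w) ⬝ᵥ (A *ᵥ (v + w) - (A - S) *ᵥ v) = w ⬝ᵥ (A *ᵥ w) + v ⬝ᵥ (S *ᵥ v) := by
  rw [dotProduct_sub, dotProduct_mulVec_add_add hA hA0, sub_mulVec, dotProduct_sub,
    add_dotProduct, add_dotProduct, hA.dotProduct_mulVec_comm w v,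
    hS.dotProduct_mulVec_comm w v, hA0, hS0]
  ring

variable [DecidableEq k]

theorem transpose_mul_eq_diagonal_mul {A S : Matrix p p R} (hA : A.IsSymm) (hS : S.IsSymm)
    {Q : Matrix p k R} {l : k → R} (heig : S * Q = A * Q * diagonal l) :
    Qᵀ * S = diagonal l * Qᵀ * A := by
  simpa [transpose_mul, hA.eq, hS.eq, Matrix.mul_assoc] using congrArg transpose heig

theorem transpose_mulVec_mulVec_eq_zero_of_mul_eq_mul_diagonal {A S : Matrix p p R}
    (hA : A.IsSymm) (hS : S.IsSymm) {Q : Matrix p k R} {l : k → R}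
    (heig : S * Q = A * Q * diagonal l) {w : p → R} (hw : Qᵀ *ᵥ (A *ᵥ w) = 0) :
    Qᵀ *ᵥ (S *ᵥ w) = 0 := by
  rw [mulVec_mulVec, transpose_mul_eq_diagonal_mul hA hS heig, ← mulVec_mulVec, ← mulVec_mulVec,
    hw, mulVec_zero]

theorem mul_diagonal_one_sub_eq {A S : Matrix p p R} {Q : Matrix p k R} {l : k → R}
    (heig : S * Q = A * Q * diagonal l) :
    A * Q * diagonal (fun j => 1 - l j) = (A - S) * Q := by
  have hD : diagonal (fun j => 1 - l j) = 1 - diagonal l := by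
    rw [← diagonal_one, diagonal_sub]
  rw [hD, Matrix.mul_sub, Matrix.mul_one, ← heig, Matrix.sub_mul]

/-- The paper's `Π_S`: the `A`-orthogonal projection onto the column span of `Q`. -/
noncomputable def aOrthogonalProj (A : Matrix p p R) (Q : Matrix p k R) (u : p → R) : p → R :=
  Q *ᵥ ((Qᵀ * A * Q)⁻¹ *ᵥ (Qᵀ *ᵥ (A *ᵥ u)))

theorem aOrthogonalProj_dotProduct_eq_zero (A : Matrix p p R) {Q : Matrix p k R} (u : p → R)
    {y : p → R} (h : Qᵀ *ᵥ y = 0) : aOrthogonalProj A Q u ⬝ᵥ y = 0 := by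
  rw [aOrthogonalProj, dotProduct_comm, ← dotProduct_transpose_mulVec, h, dotProduct_zero]

theorem transpose_mulVec_mulVec_sub_aOrthogonalProj {A : Matrix p p R} {Q : Matrix p k R}
    (hM : IsUnit (Qᵀ * A * Q).det) (u : p → R) :
    Qᵀ *ᵥ (A *ᵥ (u - aOrthogonalProj A Q u)) = 0 := by
  rw [aOrthogonalProj, mulVec_sub, mulVec_sub, mulVec_mulVec, mulVec_mulVec, mulVec_mulVec,
    mulVec_mulVec, mul_nonsing_inv _ hM, one_mulVec, sub_self]

variable {A S : Matrix p p R} {Q : Matrix p k R} {l : k → R}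

theorem coarse_mulVec_eq (heig : S * Q = A * Q * diagonal l) (u : p → R) :
    (A - A * Q * diagonal (fun j => 1 - l j) * (Qᵀ * A * Q)⁻¹ * Qᵀ * A) *ᵥ u =
      A *ᵥ u - (A - S) *ᵥ aOrthogonalProj A Q u := by
  simp only [mul_diagonal_one_sub_eq heig, sub_mulVec, aOrthogonalProj, mulVec_mulVec,
    Matrix.mul_assoc]

theorem coarse_form_eq (hA : A.IsSymm) (hS : S.IsSymm) (heig : S * Q = A * Q * diagonal l)
    (hM : IsUnit (Qᵀ * A * Q).det) (u : p → R) :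
    u ⬝ᵥ ((A - A * Q * diagonal (fun j => 1 - l j) * (Qᵀ * A * Q)⁻¹ * Qᵀ * A) *ᵥ u) =
      (u - aOrthogonalProj A Q u) ⬝ᵥ (A *ᵥ (u - aOrthogonalProj A Q u)) +
        aOrthogonalProj A Q u ⬝ᵥ (S *ᵥ aOrthogonalProj A Q u) := by
  have hAw := transpose_mulVec_mulVec_sub_aOrthogonalProj hM u
  have hA0 := aOrthogonalProj_dotProduct_eq_zero A u hAw
  have hS0 := aOrthogonalProj_dotProduct_eq_zero A u
    (transpose_mulVec_mulVec_eq_zero_of_mul_eq_mul_diagonal hA hS heig hAw)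
  rw [coarse_mulVec_eq heig]
  generalize aOrthogonalProj A Q u = v at hA0 hS0 ⊢
  conv_lhs => rw [← add_sub_cancel v u]
  exact dotProduct_mulVec_sub_sub_mulVec hA hS hA0 hS0

theorem schur_form_eq (hA : A.IsSymm) (hS : S.IsSymm) (heig : S * Q = A * Q * diagonal l)
    (hM : IsUnit (Qᵀ * A * Q).det) (u : p → R) :
    u ⬝ᵥ (S *ᵥ u) = aOrthogonalProj A Q u ⬝ᵥ (S *ᵥ aOrthogonalProj A Q u) +
      (u - aOrthogonalProj A Q u) ⬝ᵥ (S *ᵥ (u - aOrthogonalProj A Q u)) := by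
  have hSw := transpose_mulVec_mulVec_eq_zero_of_mul_eq_mul_diagonal hA hS heig
    (transpose_mulVec_mulVec_sub_aOrthogonalProj hM u)
  conv_lhs => rw [← add_sub_cancel (aOrthogonalProj A Q u) u]
  exact dotProduct_mulVec_add_add hS (aOrthogonalProj_dotProduct_eq_zero A u hSw)

end Matrix

theorem coarse_form_bounded_by_schur_general
    {p k : Type*} [Fintype p] [Fintype k] [DecidableEq k]
    (AΓΓ : Matrix p p ℝ) (S : Matrix p p ℝ)
    (hAΓΓ : AΓΓ.PosDef) (hS : S.PosSemidef)
    (Q : Matrix p k ℝ) (l : k → ℝ)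
    (heig : S * Q = AΓΓ * Q * Matrix.diagonal l)
    (hQinv : IsUnit (Qᵀ * AΓΓ * Q).det)
    (η : ℝ) (hη0 : 0 < η) (hη1 : η ≤ 1)
    (hgap : ∀ v : p → ℝ, Qᵀ *ᵥ (AΓΓ *ᵥ v) = 0 →
      η * (v ⬝ᵥ (AΓΓ *ᵥ v)) ≤ v ⬝ᵥ (S *ᵥ v)) :
    ∀ u : p → ℝ,
      u ⬝ᵥ ((AΓΓ - AΓΓ * Q * Matrix.diagonal (fun j => 1 - l j) * (Qᵀ * AΓΓ * Q)⁻¹ * Qᵀ * AΓΓ) *ᵥ u) ≤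
        (1 / η) * (u ⬝ᵥ (S *ᵥ u)) := by
  intro u
  have hA : AΓΓ.IsSymm := isHermitian_iff_isSymm.mp hAΓΓ.isHermitian
  have hS' : S.IsSymm := isHermitian_iff_isSymm.mp hS.isHermitian
  rw [coarse_form_eq hA hS' heig hQinv u, schur_form_eq hA hS' heig hQinv u]
  set v := aOrthogonalProj AΓΓ Q u
  have hw : η * ((u - v) ⬝ᵥ (AΓΓ *ᵥ (u - v))) ≤ (u - v) ⬝ᵥ (S *ᵥ (u - v)) :=
    hgap _ (transpose_mulVec_mulVec_sub_aOrthogonalProj hQinv u)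
  have hv : 0 ≤ v ⬝ᵥ (S *ᵥ v) := by simpa using hS.dotProduct_mulVec_nonneg v
  rw [mul_add, add_comm (1 / η * (v ⬝ᵥ (S *ᵥ v)))]
  gcongr
  · rw [one_div_mul_eq_div, le_div_iff₀' hη0]
    exact hw
  · exact le_mul_of_one_le_left hv (one_le_one_div hη0 hη1)

/-- Lemma 3.6 of the paper: under the spectral gap condition the
coarse bilinear form is bounded by `(1/η)` times the Schur complement energy. -/
theorem coarse_form_bounded_by_schur
    {p k : Type*} [Fintype p] [Fintype k] [DecidableEq p] [DecidableEq k]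
    (AΓΓ : Matrix p p ℝ) (S : Matrix p p ℝ)
    (hAΓΓ : AΓΓ.PosDef) (hS : S.PosSemidef)
    (Q : Matrix p k ℝ) (l : k → ℝ)
    (heig : S * Q = AΓΓ * Q * Matrix.diagonal l)
    (hQrank : LinearIndependent ℝ (fun j => (Qᵀ j : p → ℝ)))
    (hQinv : IsUnit (Qᵀ * AΓΓ * Q).det)
    (η : ℝ) (hη0 : 0 < η) (hη1 : η ≤ 1)
    (hgap : ∀ v : p → ℝ, Qᵀ *ᵥ (AΓΓ *ᵥ v) = 0 →
      η * (v ⬝ᵥ (AΓΓ *ᵥ v)) ≤ v ⬝ᵥ (S *ᵥ v))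
    (hsmall : ∀ c : k → ℝ, c ≠ 0 →
      (Q *ᵥ c) ⬝ᵥ (S *ᵥ (Q *ᵥ c)) < η * ((Q *ᵥ c) ⬝ᵥ (AΓΓ *ᵥ (Q *ᵥ c)))) :
    ∀ u : p → ℝ,
      u ⬝ᵥ ((AΓΓ - AΓΓ * Q * Matrix.diagonal (fun j => 1 - l j) * (Qᵀ * AΓΓ * Q)⁻¹ * Qᵀ * AΓΓ) *ᵥ u) ≤
        (1 / η) * (u ⬝ᵥ (S *ᵥ u)) :=
  coarse_form_bounded_by_schur_general AΓΓ S hAΓΓ hS Q l heig hQinv η hη0 hη1 hgap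
end

section
/- If B is a real symmetric positive semi-definite n×n matrix and B̂ = diag(B) is its diagonal part, then B ≤ 3 B̂ in the sense of quadratic forms provided each row of B has at most 3 nonzero entries; more generally, if each row of B has at most m nonzero entries then x^T B x ≤ m x^T B̂ x for all x. -/
/-!
Positive semidefiniteness of the principal 2×2 minors gives
`x i * B i j * x j ≤ (B i i * x i ^ 2 + B j j * x j ^ 2) / 2`. Summing this over the nonzero
entries of `B` and using that the sparsity pattern is symmetric, each diagonal term
`B i i * x i ^ 2` is counted once per nonzero entry of row `i`, hence at most `m` times.
-/

open Matrix Finset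

namespace Matrix.PosSemidef

variable {n : Type*} {B : Matrix n n ℝ}

lemma isSymm (hB : B.PosSemidef) : B.IsSymm := isHermitian_iff_isSymm.mp hB.1

variable [Fintype n]

lemma apply_mul_mul_le (hB : B.PosSemidef) (i j : n) (a b : ℝ) :
    a * B i j * b ≤ (B i i * a ^ 2 + B j j * b ^ 2) / 2 := by
  classical
  have h := hB.dotProduct_mulVec_nonneg (Pi.single i a - Pi.single j b)
  simp only [star_trivial, sub_dotProduct, dotProduct_sub, mulVec_sub, single_dotProduct,
    mulVec_single, Pi.smul_apply, col_apply, op_smul_eq_mul] at h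
  rw [hB.isSymm.apply i j] at h
  linarith

lemma dotProduct_mulVec_le_sum_card_mul (hB : B.PosSemidef) (x : n → ℝ) :
    x ⬝ᵥ (B *ᵥ x) ≤ ∑ i, #{j | B i j ≠ 0} * (B i i * x i ^ 2) := by
  set g : n → ℝ := fun i => B i i * x i ^ 2
  have hswap : ∑ i, ∑ j, (if B i j ≠ 0 then g j else 0) =
      ∑ i, ∑ j, if B i j ≠ 0 then g i else 0 := by
    rw [sum_comm]
    exact sum_congr rfl fun i _ => sum_congr rfl fun j _ => by rw [hB.isSymm.apply]
  calc x ⬝ᵥ (B *ᵥ x) = ∑ i, ∑ j, x i * B i j * x j := by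
        simp only [dotProduct, mulVec, mul_sum, mul_assoc]
    _ ≤ ∑ i, ∑ j, if B i j ≠ 0 then (g i + g j) / 2 else 0 := by
        gcongr with i _ j _
        split_ifs with h
        · exact hB.apply_mul_mul_le i j (x i) (x j)
        · simp [not_not.mp h]
    _ = (∑ i, ∑ j, (if B i j ≠ 0 then g i else 0) +
          ∑ i, ∑ j, (if B i j ≠ 0 then g j else 0)) / 2 := by
        simp only [← sum_add_distrib, sum_div]
        congr! 2 with i _ j _
        split_ifs <;> simp
    _ = ∑ i, #{j | B i j ≠ 0} * g i := by
        rw [hswap, add_self_div_two]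
        simp only [← sum_filter, sum_const, nsmul_eq_mul]

end Matrix.PosSemidef

/-- a symmetric positive semi-definite matrix with at most `m`
nonzero entries per row is bounded by `m` times its diagonal part in the sense
of quadratic forms (the case `m = 3` gives `B ≤ 3 B̂`). -/
theorem psd_bounded_by_diagonal
    {n : Type*} [Fintype n] [DecidableEq n]
    (B : Matrix n n ℝ) (hB : B.PosSemidef)
    (m : ℕ) (hsparse : ∀ i, {j | B i j ≠ 0}.ncard ≤ m) :
    ∀ x : n → ℝ, x ⬝ᵥ (B *ᵥ x) ≤ (m : ℝ) * (x ⬝ᵥ (Matrix.diagonal (fun i => B i i) *ᵥ x)) := by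
  intro x
  have hcard (i : n) : (#{j | B i j ≠ 0} : ℝ) ≤ m := by
    simpa [Set.ncard_eq_toFinset_card'] using hsparse i
  have hdiag : x ⬝ᵥ (diagonal (fun i => B i i) *ᵥ x) = ∑ i, B i i * x i ^ 2 := by
    simp only [dotProduct, mulVec_diagonal]
    exact sum_congr rfl fun i _ => by ring
  rw [hdiag, mul_sum]
  refine (hB.dotProduct_mulVec_le_sum_card_mul x).trans (sum_le_sum fun i _ => ?_)
  exact mul_le_mul_of_nonneg_right (hcard i) (mul_nonneg hB.diag_nonneg (sq_nonneg _))
end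

section
/- Stable decomposition bound for NOSAS with exact solver: with the coarse extension R_0^T built from eigenvectors with eigenvalues below η and λ_min(η) the smallest retained-complement eigenvalue, for every u the unique decomposition u = R_0^T u_Γ + Σ_{i=1}^N R_i^T u_i satisfies a_0(u_Γ,u_Γ) + Σ_{i=1}^N a_i(u_i,u_i) ≤ (2 + 3/λ_min(η)) a(u,u). -/
/-!
The coarse part `v = R₀ᵀ R_Γ u` reproduces the interface values of `u`, so `u - v` has zero
trace and splits into local parts; by `a`-orthogonality their energies add up to
`a(u - v, u - v)`. The parallelogram law bounds this by `2 a(u,u) + 2 a(v,v)`, and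
`a(v,v) ≤ (1/λ) u_Γᵀ S u_Γ ≤ (1/λ) a(u,u)` by Lemma 3.6 and energy minimality of the discrete
harmonic extension. Hence the total is at most `2 a(u,u) + 3 a(v,v) ≤ (2 + 3/λ) a(u,u)`.
-/

open Matrix

namespace Matrix

variable {ι κ R : Type*} [Fintype ι] [CommRing R] (A : Matrix ι ι R)

theorem quadForm_sub_add_quadForm_add (u v : ι → R) :
    (u - v) ⬝ᵥ (A *ᵥ (u - v)) + (u + v) ⬝ᵥ (A *ᵥ (u + v)) =
      2 * (u ⬝ᵥ (A *ᵥ u)) + 2 * (v ⬝ᵥ (A *ᵥ v)) := by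
  simp only [mulVec_sub, mulVec_add, sub_dotProduct, add_dotProduct, dotProduct_sub,
    dotProduct_add]
  ring

theorem quadForm_sum_of_pairwise_orthogonal [Fintype κ] (f : κ → ι → R)
    (horth : Pairwise fun i j => f i ⬝ᵥ (A *ᵥ f j) = 0) :
    (∑ i, f i) ⬝ᵥ (A *ᵥ ∑ i, f i) = ∑ i, f i ⬝ᵥ (A *ᵥ f i) := by
  rw [mulVec_sum, sum_dotProduct]
  refine Finset.sum_congr rfl fun i _ => ?_
  rw [dotProduct_sum, Finset.sum_eq_single i (fun j _ hji => horth hji.symm) (by simp)]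

theorem PosSemidef.quadForm_sub_le {A : Matrix ι ι ℝ} (hA : A.PosSemidef) (u v : ι → ℝ) :
    (u - v) ⬝ᵥ (A *ᵥ (u - v)) ≤ 2 * (u ⬝ᵥ (A *ᵥ u)) + 2 * (v ⬝ᵥ (A *ᵥ v)) := by
  have hsum : 0 ≤ (u + v) ⬝ᵥ (A *ᵥ (u + v)) := by
    simpa using hA.dotProduct_mulVec_nonneg (u + v)
  linarith [quadForm_sub_add_quadForm_add A u v]

end Matrix

theorem nosas_stable_decomposition_general
    {n p N : ℕ}
    (A : Matrix (Fin n) (Fin n) ℝ) (hA : A.PosDef)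
    (S : Matrix (Fin p) (Fin p) ℝ)
    (RΓ : Matrix (Fin p) (Fin n) ℝ) (R0T : Matrix (Fin n) (Fin p) ℝ)
    (m : Fin N → ℕ) (RT : ∀ i, Matrix (Fin n) (Fin (m i)) ℝ)
    (lammin : ℝ) (hl0 : 0 < lammin)
    (hS : ∀ u : Fin n → ℝ, (RΓ *ᵥ u) ⬝ᵥ (S *ᵥ (RΓ *ᵥ u)) ≤ u ⬝ᵥ (A *ᵥ u))
    (hA0 : ∀ uΓ : Fin p → ℝ,
      (R0T *ᵥ uΓ) ⬝ᵥ (A *ᵥ (R0T *ᵥ uΓ)) ≤ (1 / lammin) * (uΓ ⬝ᵥ (S *ᵥ uΓ)))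
    (htrace : ∀ uΓ : Fin p → ℝ, RΓ *ᵥ (R0T *ᵥ uΓ) = uΓ)
    (hspan : ∀ w : Fin n → ℝ, RΓ *ᵥ w = 0 →
      ∃ ui : (i : Fin N) → Fin (m i) → ℝ, w = ∑ i, RT i *ᵥ ui i)
    (horth : ∀ i j, i ≠ j → ∀ (ui : Fin (m i) → ℝ) (uj : Fin (m j) → ℝ),
      (RT i *ᵥ ui) ⬝ᵥ (A *ᵥ (RT j *ᵥ uj)) = 0) :
    ∀ u : Fin n → ℝ, ∃ ui : (i : Fin N) → Fin (m i) → ℝ,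
      u = R0T *ᵥ (RΓ *ᵥ u) + ∑ i, RT i *ᵥ ui i ∧
        (R0T *ᵥ (RΓ *ᵥ u)) ⬝ᵥ (A *ᵥ (R0T *ᵥ (RΓ *ᵥ u))) +
            ∑ i, (RT i *ᵥ ui i) ⬝ᵥ (A *ᵥ (RT i *ᵥ ui i)) ≤
          (2 + 3 / lammin) * (u ⬝ᵥ (A *ᵥ u)) := by
  intro u
  set v := R0T *ᵥ (RΓ *ᵥ u)
  obtain ⟨ui, hw⟩ := hspan (u - v) (by rw [mulVec_sub, htrace, sub_self])
  refine ⟨ui, by rw [← hw]; abel, ?_⟩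
  have hcoarse : v ⬝ᵥ (A *ᵥ v) ≤ (1 / lammin) * (u ⬝ᵥ (A *ᵥ u)) :=
    (hA0 _).trans (mul_le_mul_of_nonneg_left (hS u) (by positivity))
  have hlocal : ∑ i, (RT i *ᵥ ui i) ⬝ᵥ (A *ᵥ (RT i *ᵥ ui i)) = (u - v) ⬝ᵥ (A *ᵥ (u - v)) := by
    rw [hw, quadForm_sum_of_pairwise_orthogonal A _ fun i j hij => horth i j hij _ _]
  rw [hlocal]
  calc v ⬝ᵥ (A *ᵥ v) + (u - v) ⬝ᵥ (A *ᵥ (u - v))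
      ≤ 2 * (u ⬝ᵥ (A *ᵥ u)) + 3 * (v ⬝ᵥ (A *ᵥ v)) := by
        linarith [hA.posSemidef.quadForm_sub_le u v]
    _ ≤ 2 * (u ⬝ᵥ (A *ᵥ u)) + 3 * ((1 / lammin) * (u ⬝ᵥ (A *ᵥ u))) := by linarith
    _ = (2 + 3 / lammin) * (u ⬝ᵥ (A *ᵥ u)) := by ring

/-- stable decomposition for NOSAS with exact solver: the unique
decomposition `u = R₀ᵀ u_Γ + Σ_i R_iᵀ u_i` satisfies
`a₀(u_Γ,u_Γ) + Σ_i a_i(u_i,u_i) ≤ (2 + 3/λ_min(η)) a(u,u)`. -/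
theorem nosas_stable_decomposition
    {n p N : ℕ}
    (A : Matrix (Fin n) (Fin n) ℝ) (hA : A.PosDef)
    (S : Matrix (Fin p) (Fin p) ℝ)
    (RΓ : Matrix (Fin p) (Fin n) ℝ) (R0T : Matrix (Fin n) (Fin p) ℝ)
    (m : Fin N → ℕ) (RT : ∀ i, Matrix (Fin n) (Fin (m i)) ℝ)
    (lammin : ℝ) (hl0 : 0 < lammin) (hl1 : lammin ≤ 1)
    (hS : ∀ u : Fin n → ℝ, (RΓ *ᵥ u) ⬝ᵥ (S *ᵥ (RΓ *ᵥ u)) ≤ u ⬝ᵥ (A *ᵥ u))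
    (hA0 : ∀ uΓ : Fin p → ℝ,
      (R0T *ᵥ uΓ) ⬝ᵥ (A *ᵥ (R0T *ᵥ uΓ)) ≤ (1 / lammin) * (uΓ ⬝ᵥ (S *ᵥ uΓ)))
    (htrace : ∀ uΓ : Fin p → ℝ, RΓ *ᵥ (R0T *ᵥ uΓ) = uΓ)
    (hspan : ∀ w : Fin n → ℝ, RΓ *ᵥ w = 0 →
      ∃ ui : (i : Fin N) → Fin (m i) → ℝ, w = ∑ i, RT i *ᵥ ui i)
    (horth : ∀ i j, i ≠ j → ∀ (ui : Fin (m i) → ℝ) (uj : Fin (m j) → ℝ),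
      (RT i *ᵥ ui) ⬝ᵥ (A *ᵥ (RT j *ᵥ uj)) = 0) :
    ∀ u : Fin n → ℝ, ∃ ui : (i : Fin N) → Fin (m i) → ℝ,
      u = R0T *ᵥ (RΓ *ᵥ u) + ∑ i, RT i *ᵥ ui i ∧
        (R0T *ᵥ (RΓ *ᵥ u)) ⬝ᵥ (A *ᵥ (R0T *ᵥ (RΓ *ᵥ u))) +
            ∑ i, (RT i *ᵥ ui i) ⬝ᵥ (A *ᵥ (RT i *ᵥ ui i)) ≤
          (2 + 3 / lammin) * (u ⬝ᵥ (A *ᵥ u)) :=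
  nosas_stable_decomposition_general A hA S RΓ R0T m RT lammin hl0 hS hA0 htrace hspan horth
end

section
/- Condition number estimate for NOSAS with inexact solver: under the inexact coarse bilinear form â_0 with spectral equivalence A_ΓΓ ≤ 3 Â_ΓΓ and threshold gap λ̂_min(η), the preconditioned operator T̂_A satisfies (2 + 7 max{1, 1/λ̂_min(η)})^{-1} a(u,u) ≤ a(T̂_A u, u) ≤ 4 a(u,u) for all u, where the upper bound follows from a(R̂_0^T u_0, R̂_0^T u_0) ≤ 3 â_0(u_0,u_0), local exactness ω_i = 1, and μ(ε) = 1. -/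
/-!
With `v_j = B_j⁻¹ R_jᵀ A u`, each component `T_j = R_j B_j⁻¹ R_jᵀ A` satisfies
`a(T_j u, u) = b_j(v_j, v_j)` and `a(R_j w, u) = b_j(w, v_j)`.

The lower bound is Lions' lemma: for a stable decomposition `u = Σ_j R_j w_j`, Cauchy–Schwarz
in each `b_j` and then over `j` gives
`a(u,u) ≤ √(Σ_j b_j(w_j,w_j)) √(a(Tu,u)) ≤ √(C a(u,u)) √(a(Tu,u))`.

For the upper bound, `a(T_j u, u) = a(R_j v_j, u)` and Cauchy–Schwarz in `a` reduce everything to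
`a(R_j v_j, R_j v_j) ≤ ω b_j(v_j, v_j)`: the inexact coarse solver has `ω₀ = 3`, and on the
pairwise `a`-orthogonal exact local spaces the cross terms vanish, which gives `1`.
-/

open Matrix

theorem le_of_sq_le_mul {x y : ℝ} (hx : 0 ≤ x) (hy : 0 ≤ y) (h : x ^ 2 ≤ x * y) : x ≤ y := by
  rcases hx.eq_or_lt with rfl | hx
  · exact hy
  · exact le_of_mul_le_mul_left (by rwa [sq] at h) hx

theorem Real.sqrt_mul_sqrt_add_sqrt_mul_sqrt_le {a b c d : ℝ} (ha : 0 ≤ a) (hb : 0 ≤ b)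
    (hc : 0 ≤ c) (hd : 0 ≤ d) : √a * √b + √c * √d ≤ √(a + c) * √(b + d) := by
  simpa [Fin.sum_univ_two] using Real.sum_sqrt_mul_sqrt_le Finset.univ (f := ![a, c])
    (g := ![b, d]) (by simp [Fin.forall_fin_two, *]) (by simp [Fin.forall_fin_two, *])

namespace Matrix

variable {ι : Type*} [Fintype ι]

theorem mulVec_dotProduct {κ : Type*} [Fintype κ] (R : Matrix ι κ ℝ) (w : κ → ℝ) (z : ι → ℝ) :
    (R *ᵥ w) ⬝ᵥ z = w ⬝ᵥ Rᵀ *ᵥ z := by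
  rw [dotProduct_transpose_mulVec, dotProduct_comm]

theorem dotProduct_transpose_mul_mul_mulVec {κ : Type*} [Fintype κ] (A : Matrix ι ι ℝ)
    (R : Matrix ι κ ℝ) (x y : κ → ℝ) :
    x ⬝ᵥ (Rᵀ * A * R) *ᵥ y = (R *ᵥ x) ⬝ᵥ A *ᵥ (R *ᵥ y) := by
  rw [mulVec_dotProduct, mulVec_mulVec, mulVec_mulVec]

namespace PosSemidef

variable {B : Matrix ι ι ℝ} (hB : B.PosSemidef)
include hB

theorem dotProduct_mulVec_self_nonneg (x : ι → ℝ) : 0 ≤ x ⬝ᵥ B *ᵥ x := by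
  simpa using hB.dotProduct_mulVec_nonneg x

theorem dotProduct_mulVec_comm (x y : ι → ℝ) : x ⬝ᵥ B *ᵥ y = y ⬝ᵥ B *ᵥ x := by
  conv_lhs => rw [← isHermitian_iff_isSymm.mp hB.isHermitian]
  exact dotProduct_transpose_mulVec B x y

theorem dotProduct_mulVec_sq_le (x y : ι → ℝ) :
    (x ⬝ᵥ B *ᵥ y) ^ 2 ≤ (x ⬝ᵥ B *ᵥ x) * (y ⬝ᵥ B *ᵥ y) := by
  classical
  have h := (toBilin' B).apply_mul_apply_le_of_forall_zero_le
    (by simpa only [toBilin'_apply'] using hB.dotProduct_mulVec_self_nonneg) x y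
  simp only [toBilin'_apply'] at h
  rwa [hB.dotProduct_mulVec_comm y x, ← sq] at h

theorem dotProduct_mulVec_le_sqrt_mul_sqrt (x y : ι → ℝ) :
    x ⬝ᵥ B *ᵥ y ≤ √(x ⬝ᵥ B *ᵥ x) * √(y ⬝ᵥ B *ᵥ y) := by
  rw [← Real.sqrt_mul (hB.dotProduct_mulVec_self_nonneg x)]
  exact (le_abs_self _).trans (Real.abs_le_sqrt (hB.dotProduct_mulVec_sq_le x y))

theorem le_mul_dotProduct_mulVec_self_of_le_mul {w u : ι → ℝ} {s ω : ℝ} (hs : 0 ≤ s)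
    (hω : 0 ≤ ω) (hwu : w ⬝ᵥ B *ᵥ u = s) (hww : w ⬝ᵥ B *ᵥ w ≤ ω * s) :
    s ≤ ω * (u ⬝ᵥ B *ᵥ u) := by
  refine le_of_sq_le_mul hs (mul_nonneg hω (hB.dotProduct_mulVec_self_nonneg u)) ?_
  calc s ^ 2 ≤ (w ⬝ᵥ B *ᵥ w) * (u ⬝ᵥ B *ᵥ u) := hwu ▸ hB.dotProduct_mulVec_sq_le w u
    _ ≤ ω * s * (u ⬝ᵥ B *ᵥ u) := by
        gcongr
        exact hB.dotProduct_mulVec_self_nonneg u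
    _ = s * (ω * (u ⬝ᵥ B *ᵥ u)) := by ring

end PosSemidef

section Component

variable {κ : Type*} [Fintype κ] [DecidableEq κ]

/-- `T = R B⁻¹ Rᵀ A`; here `R` is the paper's prolongation `R_iᵀ`. -/
noncomputable def schwarzComponent (A : Matrix ι ι ℝ) (R : Matrix ι κ ℝ) (B : Matrix κ κ ℝ) :
    Matrix ι ι ℝ :=
  R * B⁻¹ * Rᵀ * A

variable (A : Matrix ι ι ℝ) (R : Matrix ι κ ℝ) {B : Matrix κ κ ℝ} (u : ι → ℝ)

theorem schwarzComponent_mulVec :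
    schwarzComponent A R B *ᵥ u = R *ᵥ (B⁻¹ *ᵥ Rᵀ *ᵥ A *ᵥ u) := by
  simp only [schwarzComponent, mulVec_mulVec, Matrix.mul_assoc]

theorem mulVec_dotProduct_mulVec_eq (hB : IsUnit B.det) (w : κ → ℝ) :
    (R *ᵥ w) ⬝ᵥ A *ᵥ u = w ⬝ᵥ B *ᵥ (B⁻¹ *ᵥ Rᵀ *ᵥ A *ᵥ u) := by
  rw [mulVec_dotProduct, mulVec_mulVec _ B, mul_nonsing_inv B hB, one_mulVec]

theorem schwarzComponent_mulVec_dotProduct_eq (hB : IsUnit B.det) :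
    (schwarzComponent A R B *ᵥ u) ⬝ᵥ A *ᵥ u =
      (B⁻¹ *ᵥ Rᵀ *ᵥ A *ᵥ u) ⬝ᵥ B *ᵥ (B⁻¹ *ᵥ Rᵀ *ᵥ A *ᵥ u) := by
  rw [schwarzComponent_mulVec, mulVec_dotProduct_mulVec_eq A R u hB]

variable {A R} (hB : B.PosDef)
include hB

theorem schwarzComponent_mulVec_dotProduct_nonneg :
    0 ≤ (schwarzComponent A R B *ᵥ u) ⬝ᵥ A *ᵥ u := by
  rw [schwarzComponent_mulVec_dotProduct_eq A R u hB.det_pos.ne'.isUnit]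
  exact hB.posSemidef.dotProduct_mulVec_self_nonneg _

theorem mulVec_dotProduct_le_sqrt_mul_sqrt (w : κ → ℝ) :
    (R *ᵥ w) ⬝ᵥ A *ᵥ u ≤
      √(w ⬝ᵥ B *ᵥ w) * √((schwarzComponent A R B *ᵥ u) ⬝ᵥ A *ᵥ u) := by
  rw [mulVec_dotProduct_mulVec_eq A R u hB.det_pos.ne'.isUnit,
    schwarzComponent_mulVec_dotProduct_eq A R u hB.det_pos.ne'.isUnit]
  exact hB.posSemidef.dotProduct_mulVec_le_sqrt_mul_sqrt _ _

theorem schwarzComponent_mulVec_dotProduct_le (hA : A.PosSemidef) {ω : ℝ} (hω : 0 ≤ ω)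
    (hstab : ∀ w, (R *ᵥ w) ⬝ᵥ A *ᵥ (R *ᵥ w) ≤ ω * (w ⬝ᵥ B *ᵥ w)) :
    (schwarzComponent A R B *ᵥ u) ⬝ᵥ A *ᵥ u ≤ ω * (u ⬝ᵥ A *ᵥ u) := by
  have hE := schwarzComponent_mulVec_dotProduct_eq A R u hB.det_pos.ne'.isUnit
  refine hA.le_mul_dotProduct_mulVec_self_of_le_mul
    (schwarzComponent_mulVec_dotProduct_nonneg u hB) hω
    (w := R *ᵥ (B⁻¹ *ᵥ Rᵀ *ᵥ A *ᵥ u)) (by rw [schwarzComponent_mulVec]) ?_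
  rw [hE]
  exact hstab _

end Component

section Family

variable {J : Type*} [Fintype J] {κ : J → Type*} [∀ j, Fintype (κ j)] [∀ j, DecidableEq (κ j)]
  {A : Matrix ι ι ℝ} {R : ∀ j, Matrix ι (κ j) ℝ} {B : ∀ j, Matrix (κ j) (κ j) ℝ}

theorem sum_mulVec_dotProduct_le_sqrt_mul_sqrt (hB : ∀ j, (B j).PosDef) (w : ∀ j, κ j → ℝ)
    (u : ι → ℝ) :
    (∑ j, R j *ᵥ w j) ⬝ᵥ A *ᵥ u ≤
      √(∑ j, w j ⬝ᵥ B j *ᵥ w j) * √(∑ j, (schwarzComponent A (R j) (B j) *ᵥ u) ⬝ᵥ A *ᵥ u) := by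
  rw [sum_dotProduct]
  exact (Finset.sum_le_sum fun j _ => mulVec_dotProduct_le_sqrt_mul_sqrt u (hB j) (w j)).trans
    (Real.sum_sqrt_mul_sqrt_le _ (fun j => (hB j).posSemidef.dotProduct_mulVec_self_nonneg _)
      (fun j => schwarzComponent_mulVec_dotProduct_nonneg u (hB j)))

theorem sum_schwarzComponent_mulVec_dotProduct_le (hA : A.PosSemidef) (hB : ∀ j, (B j).PosDef)
    {ω : ℝ} (hω : 0 ≤ ω)
    (horth : ∀ j k, j ≠ k → ∀ (x : κ j → ℝ) (y : κ k → ℝ), (R j *ᵥ x) ⬝ᵥ A *ᵥ (R k *ᵥ y) = 0)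
    (hstab : ∀ j w, (R j *ᵥ w) ⬝ᵥ A *ᵥ (R j *ᵥ w) ≤ ω * (w ⬝ᵥ B j *ᵥ w)) (u : ι → ℝ) :
    ∑ j, (schwarzComponent A (R j) (B j) *ᵥ u) ⬝ᵥ A *ᵥ u ≤ ω * (u ⬝ᵥ A *ᵥ u) := by
  set v : ∀ j, κ j → ℝ := fun j => (B j)⁻¹ *ᵥ (R j)ᵀ *ᵥ A *ᵥ u
  have hE j : (schwarzComponent A (R j) (B j) *ᵥ u) ⬝ᵥ A *ᵥ u = v j ⬝ᵥ B j *ᵥ v j :=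
    schwarzComponent_mulVec_dotProduct_eq A (R j) u (hB j).det_pos.ne'.isUnit
  refine hA.le_mul_dotProduct_mulVec_self_of_le_mul
    (Finset.sum_nonneg fun j _ => schwarzComponent_mulVec_dotProduct_nonneg u (hB j)) hω
    (w := ∑ j, R j *ᵥ v j) ?_ ?_
  · simp only [sum_dotProduct, schwarzComponent_mulVec, v]
  · calc (∑ j, R j *ᵥ v j) ⬝ᵥ A *ᵥ (∑ k, R k *ᵥ v k)
        = ∑ j, (R j *ᵥ v j) ⬝ᵥ A *ᵥ (R j *ᵥ v j) := by
          simp only [sum_dotProduct, mulVec_sum, dotProduct_sum]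
          exact Finset.sum_congr rfl fun j _ => Finset.sum_eq_single j
            (fun k _ hkj => horth k j hkj _ _) (by simp)
      _ ≤ ∑ j, ω * (v j ⬝ᵥ B j *ᵥ v j) := Finset.sum_le_sum fun j _ => hstab j (v j)
      _ = ω * ∑ j, (schwarzComponent A (R j) (B j) *ᵥ u) ⬝ᵥ A *ᵥ u := by
          rw [Finset.mul_sum]
          simp only [hE]

end Family

section Operator

variable {κ₀ : Type*} [Fintype κ₀] [DecidableEq κ₀]
  {J : Type*} [Fintype J] {κ : J → Type*} [∀ j, Fintype (κ j)] [∀ j, DecidableEq (κ j)]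
  {A : Matrix ι ι ℝ} {R₀ : Matrix ι κ₀ ℝ} {B₀ : Matrix κ₀ κ₀ ℝ}
  {R : ∀ j, Matrix ι (κ j) ℝ} {B : ∀ j, Matrix (κ j) (κ j) ℝ}

noncomputable def additiveSchwarzOperator (A : Matrix ι ι ℝ) (R₀ : Matrix ι κ₀ ℝ)
    (B₀ : Matrix κ₀ κ₀ ℝ) (R : ∀ j, Matrix ι (κ j) ℝ) (B : ∀ j, Matrix (κ j) (κ j) ℝ) :
    Matrix ι ι ℝ :=
  schwarzComponent A R₀ B₀ + ∑ j, schwarzComponent A (R j) (B j)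

theorem additiveSchwarzOperator_mulVec_dotProduct (u : ι → ℝ) :
    (additiveSchwarzOperator A R₀ B₀ R B *ᵥ u) ⬝ᵥ A *ᵥ u =
      (schwarzComponent A R₀ B₀ *ᵥ u) ⬝ᵥ A *ᵥ u +
        ∑ j, (schwarzComponent A (R j) (B j) *ᵥ u) ⬝ᵥ A *ᵥ u := by
  rw [additiveSchwarzOperator, add_mulVec, add_dotProduct, sum_mulVec, sum_dotProduct]

theorem inv_mul_le_additiveSchwarzOperator_mulVec_dotProduct (hA : A.PosSemidef)
    (hB₀ : B₀.PosDef) (hB : ∀ j, (B j).PosDef) {C : ℝ} (hC : 0 < C) {u : ι → ℝ}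
    {u₀ : κ₀ → ℝ} {w : ∀ j, κ j → ℝ} (hu : u = R₀ *ᵥ u₀ + ∑ j, R j *ᵥ w j)
    (hE : u₀ ⬝ᵥ B₀ *ᵥ u₀ + ∑ j, w j ⬝ᵥ B j *ᵥ w j ≤ C * (u ⬝ᵥ A *ᵥ u)) :
    C⁻¹ * (u ⬝ᵥ A *ᵥ u) ≤ (additiveSchwarzOperator A R₀ B₀ R B *ᵥ u) ⬝ᵥ A *ᵥ u := by
  rw [additiveSchwarzOperator_mulVec_dotProduct, inv_mul_le_iff₀ hC]
  set t₀ := (schwarzComponent A R₀ B₀ *ᵥ u) ⬝ᵥ A *ᵥ u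
  set t := ∑ j, (schwarzComponent A (R j) (B j) *ᵥ u) ⬝ᵥ A *ᵥ u
  have ht₀ : 0 ≤ t₀ := schwarzComponent_mulVec_dotProduct_nonneg u hB₀
  have ht : 0 ≤ t := Finset.sum_nonneg fun j _ => schwarzComponent_mulVec_dotProduct_nonneg u (hB j)
  have hx := hA.dotProduct_mulVec_self_nonneg u
  have hbound : u ⬝ᵥ A *ᵥ u ≤ √(C * (u ⬝ᵥ A *ᵥ u)) * √(t₀ + t) := by
    calc u ⬝ᵥ A *ᵥ u = (R₀ *ᵥ u₀) ⬝ᵥ A *ᵥ u + (∑ j, R j *ᵥ w j) ⬝ᵥ A *ᵥ u := by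
          nth_rewrite 1 [hu]
          rw [add_dotProduct]
      _ ≤ √(u₀ ⬝ᵥ B₀ *ᵥ u₀) * √t₀ + √(∑ j, w j ⬝ᵥ B j *ᵥ w j) * √t :=
          add_le_add (mulVec_dotProduct_le_sqrt_mul_sqrt u hB₀ u₀)
            (sum_mulVec_dotProduct_le_sqrt_mul_sqrt hB w u)
      _ ≤ √(u₀ ⬝ᵥ B₀ *ᵥ u₀ + ∑ j, w j ⬝ᵥ B j *ᵥ w j) * √(t₀ + t) :=
          Real.sqrt_mul_sqrt_add_sqrt_mul_sqrt_le
            (hB₀.posSemidef.dotProduct_mulVec_self_nonneg _) ht₀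
            (Finset.sum_nonneg fun j _ => (hB j).posSemidef.dotProduct_mulVec_self_nonneg _) ht
      _ ≤ √(C * (u ⬝ᵥ A *ᵥ u)) * √(t₀ + t) :=
          mul_le_mul_of_nonneg_right (Real.sqrt_le_sqrt hE) (Real.sqrt_nonneg _)
  refine le_of_sq_le_mul hx (mul_nonneg hC.le (add_nonneg ht₀ ht)) ?_
  calc (u ⬝ᵥ A *ᵥ u) ^ 2 ≤ (√(C * (u ⬝ᵥ A *ᵥ u)) * √(t₀ + t)) ^ 2 := by gcongr
    _ = u ⬝ᵥ A *ᵥ u * (C * (t₀ + t)) := by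
        rw [mul_pow, Real.sq_sqrt (mul_nonneg hC.le hx), Real.sq_sqrt (add_nonneg ht₀ ht)]
        ring

theorem additiveSchwarzOperator_mulVec_dotProduct_le (hA : A.PosSemidef) (hB₀ : B₀.PosDef)
    (hB : ∀ j, (B j).PosDef) {ω₀ ω : ℝ} (hω₀ : 0 ≤ ω₀) (hω : 0 ≤ ω)
    (hstab₀ : ∀ w, (R₀ *ᵥ w) ⬝ᵥ A *ᵥ (R₀ *ᵥ w) ≤ ω₀ * (w ⬝ᵥ B₀ *ᵥ w))
    (horth : ∀ j k, j ≠ k → ∀ (x : κ j → ℝ) (y : κ k → ℝ), (R j *ᵥ x) ⬝ᵥ A *ᵥ (R k *ᵥ y) = 0)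
    (hstab : ∀ j w, (R j *ᵥ w) ⬝ᵥ A *ᵥ (R j *ᵥ w) ≤ ω * (w ⬝ᵥ B j *ᵥ w)) (u : ι → ℝ) :
    (additiveSchwarzOperator A R₀ B₀ R B *ᵥ u) ⬝ᵥ A *ᵥ u ≤ (ω₀ + ω) * (u ⬝ᵥ A *ᵥ u) := by
  rw [additiveSchwarzOperator_mulVec_dotProduct, add_mul]
  exact add_le_add (schwarzComponent_mulVec_dotProduct_le u hB₀ hA hω₀ hstab₀)
    (sum_schwarzComponent_mulVec_dotProduct_le hA hB hω horth hstab u)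

end Operator

end Matrix

theorem nosas_inexact_condition_number_general
    {n p N : ℕ}
    (A : Matrix (Fin n) (Fin n) ℝ) (hA : A.PosDef)
    (A0hat : Matrix (Fin p) (Fin p) ℝ) (hA0hat : A0hat.PosDef)
    (R0T : Matrix (Fin n) (Fin p) ℝ)
    (m : Fin N → ℕ)
    (Ai : ∀ i, Matrix (Fin (m i)) (Fin (m i)) ℝ) (hAi : ∀ i, (Ai i).PosDef)
    (RT : ∀ i, Matrix (Fin n) (Fin (m i)) ℝ)
    (lamhat : ℝ)
    (hloc : ∀ i, Ai i = (RT i)ᵀ * A * RT i)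
    (horth : ∀ i j, i ≠ j → ∀ (ui : Fin (m i) → ℝ) (uj : Fin (m j) → ℝ),
      (RT i *ᵥ ui) ⬝ᵥ (A *ᵥ (RT j *ᵥ uj)) = 0)
    (hcoarse : ∀ u0 : Fin p → ℝ,
      (R0T *ᵥ u0) ⬝ᵥ (A *ᵥ (R0T *ᵥ u0)) ≤ 3 * (u0 ⬝ᵥ (A0hat *ᵥ u0)))
    (hdecomp : ∀ u : Fin n → ℝ, ∃ (u0 : Fin p → ℝ) (ui : (i : Fin N) → Fin (m i) → ℝ),
      u = R0T *ᵥ u0 + ∑ i, RT i *ᵥ ui i ∧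
        u0 ⬝ᵥ (A0hat *ᵥ u0) + ∑ i, ui i ⬝ᵥ (Ai i *ᵥ ui i) ≤
          (2 + 7 * max 1 (1 / lamhat)) * (u ⬝ᵥ (A *ᵥ u))) :
    ∀ u : Fin n → ℝ,
      (2 + 7 * max 1 (1 / lamhat))⁻¹ * (u ⬝ᵥ (A *ᵥ u)) ≤
          ((R0T * A0hat⁻¹ * R0Tᵀ * A + ∑ i, RT i * (Ai i)⁻¹ * (RT i)ᵀ * A) *ᵥ u) ⬝ᵥ (A *ᵥ u) ∧
        ((R0T * A0hat⁻¹ * R0Tᵀ * A + ∑ i, RT i * (Ai i)⁻¹ * (RT i)ᵀ * A) *ᵥ u) ⬝ᵥ (A *ᵥ u) ≤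
          4 * (u ⬝ᵥ (A *ᵥ u)) := by
  intro u
  have hC : 0 < 2 + 7 * max 1 (1 / lamhat) := by positivity
  have hstab i w : (RT i *ᵥ w) ⬝ᵥ A *ᵥ (RT i *ᵥ w) ≤ 1 * (w ⬝ᵥ Ai i *ᵥ w) := by
    rw [one_mul, hloc, dotProduct_transpose_mul_mul_mulVec]
  obtain ⟨u0, ui, hu, hE⟩ := hdecomp u
  exact ⟨inv_mul_le_additiveSchwarzOperator_mulVec_dotProduct hA.posSemidef hA0hat hAi hC hu hE,
    (additiveSchwarzOperator_mulVec_dotProduct_le hA.posSemidef hA0hat hAi (by norm_num)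
      zero_le_one hcoarse horth hstab u).trans_eq (by norm_num)⟩

/-- Theorem 4.6 of the paper: condition number estimate for
NOSAS with inexact coarse solver. With stable decomposition constant
`C0² = 2 + 7 max{1, 1/λ̂_min(η)}`, coarse stability
`a(R̂₀ᵀ u₀, R̂₀ᵀ u₀) ≤ 3 â₀(u₀,u₀)`, exact local solvers (`ω_i = 1`) and
pairwise `a`-orthogonal local spaces (`μ(ε) = 1`), the preconditioned operator
`T̂_A` satisfies
`(2 + 7 max{1, 1/λ̂_min(η)})⁻¹ a(u,u) ≤ a(T̂_A u, u) ≤ 4 a(u,u)`. -/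
theorem nosas_inexact_condition_number
    {n p N : ℕ}
    (A : Matrix (Fin n) (Fin n) ℝ) (hA : A.PosDef)
    (A0hat : Matrix (Fin p) (Fin p) ℝ) (hA0hat : A0hat.PosDef)
    (R0T : Matrix (Fin n) (Fin p) ℝ)
    (m : Fin N → ℕ)
    (Ai : ∀ i, Matrix (Fin (m i)) (Fin (m i)) ℝ) (hAi : ∀ i, (Ai i).PosDef)
    (RT : ∀ i, Matrix (Fin n) (Fin (m i)) ℝ)
    (lamhat : ℝ) (hlam : 0 < lamhat)
    (hloc : ∀ i, Ai i = (RT i)ᵀ * A * RT i)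
    (horth : ∀ i j, i ≠ j → ∀ (ui : Fin (m i) → ℝ) (uj : Fin (m j) → ℝ),
      (RT i *ᵥ ui) ⬝ᵥ (A *ᵥ (RT j *ᵥ uj)) = 0)
    (hcoarse : ∀ u0 : Fin p → ℝ,
      (R0T *ᵥ u0) ⬝ᵥ (A *ᵥ (R0T *ᵥ u0)) ≤ 3 * (u0 ⬝ᵥ (A0hat *ᵥ u0)))
    (hdecomp : ∀ u : Fin n → ℝ, ∃ (u0 : Fin p → ℝ) (ui : (i : Fin N) → Fin (m i) → ℝ),
      u = R0T *ᵥ u0 + ∑ i, RT i *ᵥ ui i ∧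
        u0 ⬝ᵥ (A0hat *ᵥ u0) + ∑ i, ui i ⬝ᵥ (Ai i *ᵥ ui i) ≤
          (2 + 7 * max 1 (1 / lamhat)) * (u ⬝ᵥ (A *ᵥ u))) :
    ∀ u : Fin n → ℝ,
      (2 + 7 * max 1 (1 / lamhat))⁻¹ * (u ⬝ᵥ (A *ᵥ u)) ≤
          ((R0T * A0hat⁻¹ * R0Tᵀ * A + ∑ i, RT i * (Ai i)⁻¹ * (RT i)ᵀ * A) *ᵥ u) ⬝ᵥ (A *ᵥ u) ∧
        ((R0T * A0hat⁻¹ * R0Tᵀ * A + ∑ i, RT i * (Ai i)⁻¹ * (RT i)ᵀ * A) *ᵥ u) ⬝ᵥ (A *ᵥ u) ≤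
          4 * (u ⬝ᵥ (A *ᵥ u)) :=
  nosas_inexact_condition_number_general A hA A0hat hA0hat R0T m Ai hAi RT lamhat hloc horth hcoarse
    hdecomp
end
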